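/- Let K be the reproducing kernel of an RKHS H of functions on a metric space X, and suppose K(r,r) + K(s,s) - 2Re K(r,s) ≤ 2L² d(r,s) for all r,s ∈ X. If s_N is the orthogonal projection of h ∈ H onto the span of {K(·, r_n) : r_n ∈ Ξ_N}, then for every r ∈ X and every knot r_n, |h(r) - s_N(r)| ≤ 2 L √(2 d(r, r_n)) ‖h‖_H. -/

import Mathlib

/-!
Orthogonality of the residual `h - s_N` to the knot section `K(·, r_n)` lets us replace the
evaluation functional at `r` by the difference `K(·, r) - K(·, r_n)`, whose norm is controlled
by the kernel hypothesis, while `‖h - s_N‖ ≤ ‖h‖` because `s_N` is an orthogonal projection.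
-/

open RCLike

section InnerProductSpace

variable {𝕜 E : Type*} [RCLike 𝕜] [NormedAddCommGroup E] [InnerProductSpace 𝕜 E]

local notation "⟪" x ", " y "⟫" => inner 𝕜 x y

theorem norm_sub_le_norm_of_inner_sub_eq_zero {x y : E} (h : ⟪y, x - y⟫ = 0) :
    ‖x - y‖ ≤ ‖x‖ := by
  have pythagoras := norm_add_sq_eq_norm_sq_add_norm_sq_of_inner_eq_zero y (x - y) h
  rw [add_sub_cancel] at pythagoras
  exact (sq_le_sq₀ (norm_nonneg _) (norm_nonneg _)).mp (by nlinarith [sq_nonneg ‖y‖])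

theorem norm_sub_sq_eq_re_inner (x y : E) :
    ‖x - y‖ ^ 2 = re ⟪x, x⟫ + re ⟪y, y⟫ - 2 * re ⟪x, y⟫ := by
  rw [@norm_sub_sq 𝕜, inner_self_eq_norm_sq, inner_self_eq_norm_sq]
  ring

theorem norm_sub_le_mul_sqrt_of_re_inner_le {x y : E} {L t : ℝ} (hL : 0 ≤ L)
    (h : re ⟪x, x⟫ + re ⟪y, y⟫ - 2 * re ⟪x, y⟫ ≤ L ^ 2 * t) :
    ‖x - y‖ ≤ L * √t := by
  rw [← norm_sub_sq_eq_re_inner] at h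
  calc ‖x - y‖ ≤ √(L ^ 2 * t) := Real.le_sqrt_of_sq_le h
    _ = L * √t := by rw [Real.sqrt_mul (sq_nonneg L), Real.sqrt_sq hL]

theorem norm_inner_sub_inner_le_of_inner_sub_eq_zero {x s y : E} (hs : ⟪s, x - s⟫ = 0)
    (hy : ⟪y, x - s⟫ = 0) (z : E) : ‖⟪z, x⟫ - ⟪z, s⟫‖ ≤ ‖z - y‖ * ‖x‖ :=
  calc ‖⟪z, x⟫ - ⟪z, s⟫‖ = ‖⟪z - y, x - s⟫‖ := by rw [inner_sub_left, hy, sub_zero, inner_sub_right]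
    _ ≤ ‖z - y‖ * ‖x - s‖ := norm_inner_le_norm _ _
    _ ≤ ‖z - y‖ * ‖x‖ := by gcongr; exact norm_sub_le_norm_of_inner_sub_eq_zero hs

end InnerProductSpace

/-- Abstract RKHS projection error bound: let `H` be an RKHS of functions on a metric
space `X` with kernel `K(r,s) = ⟪k r, k s⟫` given by kernel sections `k : X → H`
(so `h(r) = ⟪k r, h⟫`).  Suppose `K(r,r) + K(s,s) - 2 Re K(r,s) ≤ 2 L² d(r,s)`.
If `s_N` is the orthogonal projection of `h ∈ H` onto `span{K(·, r_n)}` (membership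
and orthogonality of the residual), then for every `r ∈ X` and every knot `r_n`,
`|h(r) - s_N(r)| ≤ 2 L √(2 d(r, r_n)) ‖h‖_H`. -/
theorem stmt16 (X : Type*) [MetricSpace X]
    (H : Type*) [NormedAddCommGroup H] [InnerProductSpace ℂ H]
    (k : X → H) (L : ℝ) (hL : 0 ≤ L)
    (hLip : ∀ r s : X,
      (inner ℂ (k r) (k r) : ℂ).re + (inner ℂ (k s) (k s) : ℂ).re
        - 2 * (inner ℂ (k r) (k s) : ℂ).re ≤ 2 * L ^ 2 * dist r s)
    (N : ℕ) (rknots : Fin N → X) (h sN : H)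
    (hsN : sN ∈ Submodule.span ℂ (Set.range (fun n => k (rknots n))))
    (horth : ∀ v ∈ Submodule.span ℂ (Set.range (fun n => k (rknots n))),
      (inner ℂ v (h - sN) : ℂ) = 0) :
    ∀ (r : X) (n : Fin N),
      ‖(inner ℂ (k r) h : ℂ) - (inner ℂ (k r) sN : ℂ)‖
        ≤ 2 * L * Real.sqrt (2 * dist r (rknots n)) * ‖h‖ := by
  intro r n
  have hknot : k (rknots n) ∈ Submodule.span ℂ (Set.range (fun n => k (rknots n))) :=
    Submodule.subset_span ⟨n, rfl⟩
  have hsection : ‖k r - k (rknots n)‖ ≤ L * √(2 * dist r (rknots n)) :=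
    norm_sub_le_mul_sqrt_of_re_inner_le (𝕜 := ℂ) hL <| by
      simp only [re_to_complex]
      linarith [hLip r (rknots n)]
  calc _ ≤ ‖k r - k (rknots n)‖ * ‖h‖ :=
        norm_inner_sub_inner_le_of_inner_sub_eq_zero (horth _ hsN) (horth _ hknot) (k r)
    _ ≤ L * √(2 * dist r (rknots n)) * ‖h‖ := by gcongr
    _ ≤ 2 * L * √(2 * dist r (rknots n)) * ‖h‖ := by
        gcongr
        linarith
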